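/- For all integers n ≥ 2 and m ≥ 2, the Hosoya polynomial of the Mycielskian of the complete bipartite graph K_{n,m} is H(μ(K_{n,m}), x) = (3nm + n + m)x + (2n² + 2m² + nm)x². -/

import Mathlib

open SimpleGraph Polynomial Finset

/-- The Mycielskian `μ(G)` of a simple graph `G`. Vertices `Sum.inl v` are the original
vertices `v_i`, vertices `Sum.inr (Sum.inl v)` are the shadow vertices `u_i`, and
`Sum.inr (Sum.inr ())` is the apex vertex `w`.  Edges: the edges of `G`, the edges `w u_i`,
and the edges `u_i v_j`, `u_j v_i` for every edge `v_i v_j` of `G`. -/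
def mycielskian {V : Type*} (G : SimpleGraph V) : SimpleGraph (V ⊕ V ⊕ Unit) :=
  SimpleGraph.fromRel (fun a b =>
    match a, b with
    | Sum.inl a, Sum.inl b => G.Adj a b
    | Sum.inl a, Sum.inr (Sum.inl b) => G.Adj a b
    | Sum.inr (Sum.inl _), Sum.inr (Sum.inr _) => True
    | _, _ => False)

/-- `distCount G k` is `d(G,k)`, the number of unordered pairs of distinct vertices of `G`
whose graph distance is exactly `k`. -/
noncomputable def distCount {V : Type*} (G : SimpleGraph V) (k : ℕ) : ℕ :=
  Nat.card {e : Sym2 V // ¬ e.IsDiag ∧ Sym2.lift ⟨G.dist, fun _ _ => G.dist_comm⟩ e = k}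

/-- The Hosoya polynomial `H(G,x) = Σ_{k=1}^{D(G)} d(G,k) x^k` (with rational coefficients). -/
noncomputable def hosoya {V : Type*} (G : SimpleGraph V) : Polynomial ℚ :=
  ∑ k ∈ Finset.Icc 1 G.diam, (distCount G k : ℚ) • Polynomial.X ^ k

/-- The Wiener index `W(G)`: the sum of distances over all unordered pairs of distinct
vertices (the diagonal contributes `0`, so we may sum over ordered pairs and halve). -/
noncomputable def wiener {V : Type*} (G : SimpleGraph V) [Fintype V] : ℚ :=
  (∑ u : V, ∑ v : V, (G.dist u v : ℚ)) / 2

/-- The Hyper-Wiener index `WW(G) = (1/2) Σ_{{u,v}} (d(u,v)² + d(u,v))`. -/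
noncomputable def hyperWiener {V : Type*} (G : SimpleGraph V) [Fintype V] : ℚ :=
  (∑ u : V, ∑ v : V, ((G.dist u v : ℚ) ^ 2 + (G.dist u v : ℚ))) / 4

/-- The TSZ index `TSZ(G) = (1/6) Σ_{{u,v}} d³ + (1/2) Σ_{{u,v}} d² + (1/3) Σ_{{u,v}} d`. -/
noncomputable def tszIndex {V : Type*} (G : SimpleGraph V) [Fintype V] : ℚ :=
  (∑ u : V, ∑ v : V, (G.dist u v : ℚ) ^ 3) / 12
    + (∑ u : V, ∑ v : V, (G.dist u v : ℚ) ^ 2) / 4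
    + (∑ u : V, ∑ v : V, (G.dist u v : ℚ)) / 6

/-- The Harary index `Har(G) = Σ_{{u,v}} 1/d(u,v)` (diagonal terms are `0⁻¹ = 0`). -/
noncomputable def harary {V : Type*} (G : SimpleGraph V) [Fintype V] : ℚ :=
  (∑ u : V, ∑ v : V, ((G.dist u v : ℚ))⁻¹) / 2

/-- The closeness `C(G) = Σ_u Σ_{v ≠ u} 2^{-d(u,v)}` over ordered pairs of distinct vertices. -/
noncomputable def closeness {V : Type*} (G : SimpleGraph V) [Fintype V] : ℚ :=
  letI := Classical.decEq V
  ∑ u : V, ∑ v : V, if v = u then 0 else ((1 : ℚ) / 2) ^ (G.dist u v)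

/-- `σ_{uv}`: the number of shortest paths (walks of length `dist u v`) from `u` to `v`. -/
noncomputable def numSP {V : Type*} (G : SimpleGraph V) (u v : V) : ℕ :=
  Nat.card {p : G.Walk u v // p.length = G.dist u v}

/-- `σ_{uv}(w)`: the number of shortest paths from `u` to `v` passing through `w`. -/
noncomputable def numSPthrough {V : Type*} (G : SimpleGraph V) (w u v : V) : ℕ :=
  Nat.card {p : G.Walk u v // p.length = G.dist u v ∧ w ∈ p.support}

/-- The betweenness centrality `B_w = Σ_{{u,v}, u ≠ w ≠ v} σ_{uv}(w)/σ_{uv}` of a vertex `w`,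
summed over unordered pairs of distinct vertices (ordered pairs, halved). -/
noncomputable def btwVertex {V : Type*} (G : SimpleGraph V) [Fintype V] (w : V) : ℚ :=
  letI := Classical.decEq V
  (∑ u : V, ∑ v : V,
    if u ≠ v ∧ u ≠ w ∧ v ≠ w then (numSPthrough G w u v : ℚ) / (numSP G u v) else 0) / 2

/-- The betweenness centrality of a graph: `B⁻(G) = (1/N) Σ_w B_w`. -/
noncomputable def btw {V : Type*} (G : SimpleGraph V) [Fintype V] : ℚ :=
  (∑ w : V, btwVertex G w) / (Fintype.card V)

/-- The star graph `S_n`: center `0` joined to the `n` leaves `1, …, n`. -/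
def starGraph (n : ℕ) : SimpleGraph (Fin (n + 1)) :=
  SimpleGraph.fromRel (fun a _ => a = 0)

/-- The join `G₁ ⊕ G₂` of two graphs on disjoint vertex sets: all edges of `G₁`, all edges
of `G₂`, and all edges between `V(G₁)` and `V(G₂)`. -/
def joinGraph {V₁ V₂ : Type*} (G₁ : SimpleGraph V₁) (G₂ : SimpleGraph V₂) :
    SimpleGraph (V₁ ⊕ V₂) :=
  SimpleGraph.fromRel (fun a b =>
    match a, b with
    | Sum.inl a, Sum.inl b => G₁.Adj a b
    | Sum.inr a, Sum.inr b => G₂.Adj a b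
    | Sum.inl _, Sum.inr _ => True
    | _, _ => False)

/-!
`μ(K_{n,m})` is a blow-up of the 5-cycle `μ(K₂)`, the independent classes being the two sides of
`K_{n,m}`, their two shadow copies and the apex. Any two non-adjacent vertices of `C₅` have a
common neighbour, so `μ(K_{n,m})` has diameter 2. Hence `d(μ(K_{n,m}), 1)` is the number of edges,
`3nm + n + m` by `|E(μG)| = 3|E(G)| + |V(G)|`, and `d(μ(K_{n,m}), 2)` is the number of non-edges,
`C(2n + 2m + 1, 2) - (3nm + n + m)`.
-/

namespace SimpleGraph

variable {V : Type*} (G : SimpleGraph V)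

theorem natCard_edgeSet_add_natCard_edgeSet_compl [Finite V] :
    Nat.card G.edgeSet + Nat.card Gᶜ.edgeSet = (Nat.card V).choose 2 := by
  classical
  have := Fintype.ofFinite V
  simp only [Nat.card_coe_set_eq]
  rw [← Set.ncard_union_eq (disjoint_edgeSet.mpr disjoint_compl_right), ← edgeSet_sup,
    sup_compl_eq_top, Nat.card_eq_fintype_card, ← card_edgeFinset_top_eq_card_choose_two,
    Set.ncard_eq_toFinset_card']
  rfl

theorem natCard_edgeSet_completeBipartiteGraph (α β : Type*) [Finite α] [Finite β] :
    Nat.card (completeBipartiteGraph α β).edgeSet = Nat.card α * Nat.card β := by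
  rw [Nat.card_coe_set_eq, Set.ncard_def, encard_edgeSet_completeBipartiteGraph,
    ENat.card_eq_coe_natCard, ENat.card_eq_coe_natCard]
  rfl

variable {G}

theorem dist_eq_two_of_diam_eq_two (hG : G.diam = 2) {u v : V} (hne : u ≠ v)
    (hadj : ¬ G.Adj u v) : G.dist u v = 2 := by
  have hfin : G.ediam ≠ ⊤ := ediam_ne_top_of_diam_ne_zero (by omega)
  have hle : G.dist u v ≤ 2 := hG ▸ dist_le_diam hfin
  have h0 : G.dist u v ≠ 0 :=
    dist_ne_zero_iff_ne_and_reachable.mpr ⟨hne, preconnected_of_ediam_ne_top hfin u v⟩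
  have h1 : G.dist u v ≠ 1 := mt dist_eq_one_iff_adj.mp hadj
  omega

theorem diam_eq_two_of_commonNeighbors_nonempty {u₀ v₀ : V} (hne : u₀ ≠ v₀)
    (hadj : ¬ G.Adj u₀ v₀)
    (h : ∀ u v, u ≠ v → ¬ G.Adj u v → (G.commonNeighbors u v).Nonempty) : G.diam = 2 := by
  have hle : G.ediam ≤ 2 := by
    refine ediam_le_iff.mpr fun u v => not_lt.mp fun hlt => ?_
    obtain ⟨huv, hadj, hempty⟩ := two_lt_edist_iff.mp hlt
    exact (h u v huv hadj).ne_empty hempty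
  have hge : 2 ≤ G.ediam := edist_eq_two_iff.mpr ⟨hne, hadj, h _ _ hne hadj⟩ ▸ edist_le_ediam
  rw [diam, le_antisymm hle hge]
  rfl

theorem commonNeighbors_comap_nonempty {W : Type*} {H : SimpleGraph W} {f : V → W}
    (hf : Function.Surjective f) (hH : ∀ i j, ¬ H.Adj i j → ∃ k, H.Adj i k ∧ H.Adj k j)
    {u v : V} (huv : ¬ (H.comap f).Adj u v) : ((H.comap f).commonNeighbors u v).Nonempty := by
  obtain ⟨k, hik, hkj⟩ := hH _ _ huv
  obtain ⟨w, rfl⟩ := hf k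
  exact ⟨w, (mem_commonNeighbors _).mpr ⟨hik, hkj.symm⟩⟩

theorem cycleGraph_five_exists_common_neighbor :
    ∀ i j : Fin 5, ¬ (cycleGraph 5).Adj i j →
      ∃ k, (cycleGraph 5).Adj i k ∧ (cycleGraph 5).Adj k j := by
  decide

end SimpleGraph

section Hosoya

variable {V : Type*} (G : SimpleGraph V)

theorem distCount_one : distCount G 1 = Nat.card G.edgeSet := by
  refine Nat.card_congr (Equiv.subtypeEquivRight fun e => ?_)
  induction e using Sym2.ind with
  | h a b =>
    simp only [Sym2.mk_isDiag_iff, Sym2.lift_mk, dist_eq_one_iff_adj, mem_edgeSet]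
    exact and_iff_right_of_imp fun h => h.ne

theorem distCount_two_of_forall_dist_eq_two
    (h : ∀ u v, u ≠ v → ¬ G.Adj u v → G.dist u v = 2) :
    distCount G 2 = Nat.card Gᶜ.edgeSet := by
  refine Nat.card_congr (Equiv.subtypeEquivRight fun e => ?_)
  induction e using Sym2.ind with
  | h a b =>
    simp only [Sym2.mk_isDiag_iff, Sym2.lift_mk, mem_edgeSet, compl_adj]
    refine ⟨fun ⟨hne, hd⟩ => ⟨hne, fun hadj => ?_⟩, fun ⟨hne, hadj⟩ => ⟨hne, h a b hne hadj⟩⟩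
    simp [dist_eq_one_iff_adj.mpr hadj] at hd

theorem hosoya_of_diam_eq_two (hG : G.diam = 2) :
    hosoya G = C (Nat.card G.edgeSet : ℚ) * X + C (Nat.card Gᶜ.edgeSet : ℚ) * X ^ 2 := by
  rw [hosoya, hG, show Finset.Icc 1 2 = {1, 2} from rfl, Finset.sum_pair (by norm_num),
    distCount_one, distCount_two_of_forall_dist_eq_two G fun _ _ => dist_eq_two_of_diam_eq_two hG,
    pow_one, smul_eq_C_mul, smul_eq_C_mul]

end Hosoya

section Mycielskian

variable {V : Type*} (G : SimpleGraph V)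

@[simp] theorem mycielskian_adj_inl_inl (a b : V) :
    (mycielskian G).Adj (.inl a) (.inl b) ↔ G.Adj a b := by
  simp only [mycielskian, fromRel_adj, G.adj_comm b a, or_self]
  exact and_iff_right_of_imp fun h => by simpa using h.ne

@[simp] theorem mycielskian_adj_inl_inr_inl (a b : V) :
    (mycielskian G).Adj (.inl a) (.inr (.inl b)) ↔ G.Adj a b := by
  simp [mycielskian]

@[simp] theorem mycielskian_adj_inr_inl_inl (a b : V) :
    (mycielskian G).Adj (.inr (.inl a)) (.inl b) ↔ G.Adj a b := by
  simp [mycielskian, G.adj_comm]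

@[simp] theorem mycielskian_not_adj_inr_inl_inr_inl (a b : V) :
    ¬ (mycielskian G).Adj (.inr (.inl a)) (.inr (.inl b)) := by
  simp [mycielskian]

@[simp] theorem mycielskian_adj_inr_inl_inr_inr (a : V) (u : Unit) :
    (mycielskian G).Adj (.inr (.inl a)) (.inr (.inr u)) := by
  simp [mycielskian]

@[simp] theorem mycielskian_adj_inr_inr_inr_inl (a : V) (u : Unit) :
    (mycielskian G).Adj (.inr (.inr u)) (.inr (.inl a)) := by
  simp [mycielskian]

@[simp] theorem mycielskian_not_adj_inl_inr_inr (a : V) (u : Unit) :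
    ¬ (mycielskian G).Adj (.inl a) (.inr (.inr u)) := by
  simp [mycielskian]

@[simp] theorem mycielskian_not_adj_inr_inr_inl (a : V) (u : Unit) :
    ¬ (mycielskian G).Adj (.inr (.inr u)) (.inl a) := by
  simp [mycielskian]

@[simp] theorem mycielskian_not_adj_inr_inr_inr_inr (u v : Unit) :
    ¬ (mycielskian G).Adj (.inr (.inr u)) (.inr (.inr v)) := by
  simp [mycielskian]

theorem natCard_edgeSet_mycielskian [Finite V] :
    Nat.card (mycielskian G).edgeSet = 3 * Nat.card G.edgeSet + Nat.card V := by
  classical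
  have := Fintype.ofFinite V
  -- Handshake lemma in both graphs: `v` has degree `2 deg v` in `μ G`, its shadow `deg v + 1`,
  -- and the apex `|V|`.
  have hG := G.sum_degrees_eq_twice_card_edges
  have hμ := (mycielskian G).sum_degrees_eq_twice_card_edges
  simp only [← card_neighborFinset_eq_degree, neighborFinset_eq_filter, Finset.card_filter] at hG hμ
  simp [Fintype.sum_sum_type, Finset.sum_add_distrib, hG, -Finset.sum_boole] at hμ
  simp only [Nat.card_eq_fintype_card, ← edgeFinset_card]
  omega

/-- Position on the 5-cycle `μ(K₂)`, in cyclic order: side `α`, side `β`, shadows of `α`, apex,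
shadows of `β`. -/
def mycielskianBipartiteToCycle {α β : Type*} : (α ⊕ β) ⊕ (α ⊕ β) ⊕ Unit → Fin 5
  | .inl (.inl _) => 0
  | .inl (.inr _) => 1
  | .inr (.inl (.inl _)) => 2
  | .inr (.inr _) => 3
  | .inr (.inl (.inr _)) => 4

theorem mycielskian_completeBipartiteGraph_eq_comap (α β : Type*) :
    mycielskian (completeBipartiteGraph α β) =
      (cycleGraph 5).comap mycielskianBipartiteToCycle := by
  ext u v
  rcases u with (a | b) | ((a | b) | ⟨⟩) <;> rcases v with (a' | b') | ((a' | b') | ⟨⟩) <;>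
    simp [mycielskianBipartiteToCycle, cycleGraph_adj] <;> decide

theorem mycielskianBipartiteToCycle_surjective (α β : Type*) [Nonempty α] [Nonempty β] :
    Function.Surjective (mycielskianBipartiteToCycle (α := α) (β := β)) := by
  obtain ⟨a⟩ := ‹Nonempty α›
  obtain ⟨b⟩ := ‹Nonempty β›
  intro i
  fin_cases i
  exacts [⟨.inl (.inl a), rfl⟩, ⟨.inl (.inr b), rfl⟩, ⟨.inr (.inl (.inl a)), rfl⟩,
    ⟨.inr (.inr ()), rfl⟩, ⟨.inr (.inl (.inr b)), rfl⟩]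

theorem diam_mycielskian_completeBipartiteGraph (α β : Type*) [Nonempty α] [Nonempty β] :
    (mycielskian (completeBipartiteGraph α β)).diam = 2 := by
  obtain ⟨a⟩ := ‹Nonempty α›
  rw [mycielskian_completeBipartiteGraph_eq_comap]
  refine diam_eq_two_of_commonNeighbors_nonempty (u₀ := .inl (.inl a)) (v₀ := .inr (.inr ()))
    (by simp) (by simp [mycielskianBipartiteToCycle, cycleGraph_adj]; decide)
    fun u v _ huv => commonNeighbors_comap_nonempty
      (mycielskianBipartiteToCycle_surjective α β) cycleGraph_five_exists_common_neighbor huv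

end Mycielskian

/-- For `n, m ≥ 2`, `H(μ(K_{n,m}), x) = (3nm+n+m)x + (2n²+2m²+nm)x²`. -/
theorem stmt_6 (n m : ℕ) (hn : 2 ≤ n) (hm : 2 ≤ m) :
    hosoya (mycielskian (completeBipartiteGraph (Fin n) (Fin m))) =
      Polynomial.C ((3 * (n * m) + n + m : ℕ) : ℚ) * Polynomial.X +
        Polynomial.C ((2 * n ^ 2 + 2 * m ^ 2 + n * m : ℕ) : ℚ) * Polynomial.X ^ 2 := by
  have : NeZero n := ⟨by omega⟩
  have : NeZero m := ⟨by omega⟩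
  set G := mycielskian (completeBipartiteGraph (Fin n) (Fin m))
  have hE : Nat.card G.edgeSet = 3 * (n * m) + n + m := by
    rw [natCard_edgeSet_mycielskian, natCard_edgeSet_completeBipartiteGraph]
    simp only [Nat.card_eq_fintype_card, Fintype.card_sum, Fintype.card_fin]
    ring
  have hEc : Nat.card Gᶜ.edgeSet = 2 * n ^ 2 + 2 * m ^ 2 + n * m := by
    have hsum := natCard_edgeSet_add_natCard_edgeSet_compl G
    have hchoose := Nat.add_one_mul_choose_eq (2 * (n + m)) 1
    simp only [Nat.card_eq_fintype_card, Fintype.card_sum, Fintype.card_fin, Fintype.card_unit,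
      hE] at hsum
    rw [Nat.choose_one_right, show 2 * (n + m) + 1 = n + m + (n + m + 1) by ring] at hchoose
    nlinarith
  rw [hosoya_of_diam_eq_two G (diam_mycielskian_completeBipartiteGraph _ _), hE, hEc]
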